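/- arXiv:2410.08323 — 3 statements merged into one kernel-verified Lean document; each statement's English description precedes it below -/
import Mathlib

section
/- Let K be a finite abstract simplicial complex of dimension d, i.e. every face of K has at most d + 1 elements. Then K admits a geometric realization in ℝ^{2d+1}. -/
/-- A finite abstract simplicial complex on a vertex set `V`: a collection of
nonempty finite subsets of `V` (faces) containing all singletons and closed
under taking nonempty subsets. -/
structure AbstractSimplicialCpx (V : Type*) where
  faces : Set (Finset V)
  nonempty_of_mem : ∀ s ∈ faces, s.Nonempty
  singleton_mem : ∀ v : V, {v} ∈ faces
  down_closed : ∀ s ∈ faces, ∀ t : Finset V, t ⊆ s → t.Nonempty → t ∈ faces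

/-- `f : V → ℝ^m` is a geometric realization of the abstract simplicial complex `K`:
`f` is injective, the image of every face is affinely independent, and the convex
hulls of the images of two faces intersect exactly in the convex hull of the image
of their intersection (the convex hull of the empty set being empty). -/
def IsGeomRealization {V : Type*} [DecidableEq V] (K : AbstractSimplicialCpx V) {m : ℕ}
    (f : V → EuclideanSpace ℝ (Fin m)) : Prop :=
  Function.Injective f ∧
  (∀ s ∈ K.faces, AffineIndependent ℝ (fun v : (s : Set V) => f v)) ∧
  (∀ s ∈ K.faces, ∀ t ∈ K.faces,
    convexHull ℝ (f '' (s : Set V)) ∩ convexHull ℝ (f '' (t : Set V)) =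
      convexHull ℝ (f '' ((s ∩ t : Finset V) : Set V)))

/-!
Place the vertices on the moment curve `t ↦ (t, t², …, t^{2d+1})` at distinct parameters.
An affine dependence among at most `n + 1` points of the moment curve in `ℝⁿ` is a vector of
weights annihilating all monomials of degree `≤ n` at distinct nodes, which must vanish
(test it against the Lagrange basis polynomials). Two faces span at most `2d + 2` vertices,
so their union is affinely independent in `ℝ^{2d+1}`, and two simplices whose joint vertex
set is affinely independent meet exactly in the simplex on their common vertices.
-/

open Finset Polynomial

section Vandermonde

variable {F ι : Type*} [Field F] {s : Finset ι} {t w : ι → F} {n : ℕ}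

lemma sum_mul_eval_eq_zero_of_sum_mul_pow_eq_zero
    (h : ∀ i ≤ n, ∑ v ∈ s, w v * t v ^ i = 0) {P : F[X]} (hP : P.natDegree ≤ n) :
    ∑ v ∈ s, w v * P.eval (t v) = 0 := by
  simp_rw [eval_eq_sum_range' (Nat.lt_succ_of_le hP), mul_sum]
  rw [sum_comm]
  refine sum_eq_zero fun i hi => ?_
  simp_rw [mul_left_comm (w _), ← mul_sum]
  rw [h i (Nat.lt_succ_iff.mp (mem_range.mp hi)), mul_zero]

lemma eq_zero_of_sum_mul_pow_eq_zero [DecidableEq ι] (ht : Set.InjOn t s) (hs : #s ≤ n + 1)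
    (h : ∀ i ≤ n, ∑ v ∈ s, w v * t v ^ i = 0) : ∀ v ∈ s, w v = 0 := by
  intro v hv
  have hdeg : (Lagrange.basis s t v).natDegree ≤ n := by
    rw [Lagrange.natDegree_basis ht hv]
    omega
  have := sum_mul_eval_eq_zero_of_sum_mul_pow_eq_zero h hdeg
  rwa [sum_eq_single_of_mem v hv fun u hu hne => by
    rw [Lagrange.eval_basis_of_ne hne.symm hu, mul_zero],
    Lagrange.eval_basis_self ht hv, mul_one] at this

end Vandermonde

noncomputable def momentCurve (n : ℕ) (t : ℝ) : EuclideanSpace ℝ (Fin n) :=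
  WithLp.toLp 2 fun i => t ^ ((i : ℕ) + 1)

lemma momentCurve_injective {n : ℕ} (hn : 0 < n) : Function.Injective (momentCurve n) :=
  fun a b hab => by simpa [momentCurve] using congrArg (· ⟨0, hn⟩) hab

lemma affineIndependent_momentCurve {ι : Type*} {n : ℕ} {s : Finset ι} {t : ι → ℝ}
    (ht : Set.InjOn t s) (hs : #s ≤ n + 1) :
    AffineIndependent ℝ fun v : (s : Set ι) => momentCurve n (t v) := by
  classical
  rw [affineIndependent_iff]
  intro S w hw₀ hw₁
  refine eq_zero_of_sum_mul_pow_eq_zero (n := n) (t := fun v : (s : Set ι) => t v)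
    (fun a _ b _ hab => Subtype.ext (ht a.2 b.2 hab)) ?_ ?_
  · calc #S ≤ Fintype.card (s : Set ι) := card_le_univ S
      _ = #s := Fintype.card_coe s
      _ ≤ n + 1 := hs
  · rintro (_ | i) hi
    · simpa using hw₀
    · simpa [momentCurve] using congrArg (· ⟨i, hi⟩) hw₁

lemma convexHull_image_inter_of_affineIndependent {V E : Type*} [DecidableEq V]
    [AddCommGroup E] [Module ℝ E] {f : V → E} (hf : Function.Injective f) {s t : Finset V}
    (hst : AffineIndependent ℝ fun v : ((s ∪ t : Finset V) : Set V) => f v) :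
    convexHull ℝ (f '' s) ∩ convexHull ℝ (f '' t) = convexHull ℝ (f '' (s ∩ t : Finset V)) := by
  classical
  have hU : AffineIndependent ℝ ((↑) : ((s ∪ t).image f : Set E) → E) := by
    rw [coe_image, Set.image_eq_range]
    exact hst.range
  rw [coe_inter, Set.image_inter hf, ← coe_image, ← coe_image]
  exact (hU.convexHull_inter (image_subset_image subset_union_left)
    (image_subset_image subset_union_right)).symm

/-- Every finite abstract simplicial complex of dimension `d` (i.e. all faces have
at most `d + 1` vertices) admits a geometric realization in `ℝ^{2d+1}`. -/
theorem stmt2 {V : Type*} [Fintype V] [DecidableEq V] (K : AbstractSimplicialCpx V) (d : ℕ)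
    (hdim : ∀ s ∈ K.faces, s.card ≤ d + 1) :
    ∃ f : V → EuclideanSpace ℝ (Fin (2 * d + 1)), IsGeomRealization K f := by
  set q : V → ℝ := fun v => (Fintype.equivFin V v : ℕ)
  have hq : Function.Injective q := fun a b hab =>
    (Fintype.equivFin V).injective (Fin.val_injective (Nat.cast_injective hab))
  have hf : Function.Injective (momentCurve (2 * d + 1) ∘ q) :=
    (momentCurve_injective (by omega)).comp hq
  refine ⟨momentCurve (2 * d + 1) ∘ q, hf,
    fun s hs => affineIndependent_momentCurve hq.injOn (by grind),
    fun s hs t ht => convexHull_image_inter_of_affineIndependent hf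
      (affineIndependent_momentCurve hq.injOn ?_)⟩
  calc #(s ∪ t) ≤ #s + #t := card_union_le s t
    _ ≤ 2 * d + 1 + 1 := by grind
end

section
/- Let v : Fin (d+1) → ℝ^n be any family of d + 1 points, and let s_0 ⊊ s_1 ⊊ ⋯ ⊊ s_k be a strictly increasing chain of nonempty subsets of Fin (d+1). For each j let b_j be the barycenter (arithmetic mean) of the points {v_i : i ∈ s_j}. Then the diameter of the convex hull of {b_0, …, b_k} is at most (d/(d+1)) times the diameter of the convex hull of {v_0, …, v_d}. In other words, every simplex of the barycentric subdivision of a d-simplex has diameter at most d/(d+1) times the diameter of the original simplex. -/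
/-!
The barycenter `b` of a set of `m` points at mutual distance `≤ D` lies within `(1 - 1/m) D` of
each of them, since `v i - b` is `1/m` times the sum of the `m - 1` vectors `v i - v l`, `l ≠ i`.
The closed ball of that radius about `b` therefore contains the convex hull of the points, and
with it the barycenter of every subset. Along a chain `s j ⊆ s j'` this bounds `dist (b j) (b j')` by
`(1 - 1/#(s j')) D ≤ (1 - 1/(d+1)) D`, and the diameter of a convex hull is that of its vertices.
-/

open Metric Finset

section Barycenter

variable {E ι : Type*} [SeminormedAddCommGroup E] [NormedSpace ℝ E] (p : ι → E) {t t' : Finset ι}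
  {D : ℝ}

theorem dist_barycenter_le_of_mem {i : ι} (hi : i ∈ t) (hD : ∀ l ∈ t, dist (p i) (p l) ≤ D) :
    dist (p i) ((#t : ℝ)⁻¹ • ∑ l ∈ t, p l) ≤ (1 - (#t : ℝ)⁻¹) * D := by
  classical
  have hcard : (0 : ℝ) < #t := by exact_mod_cast card_pos.mpr ⟨i, hi⟩
  have hdiff : p i - (#t : ℝ)⁻¹ • ∑ l ∈ t, p l = (#t : ℝ)⁻¹ • ∑ l ∈ t, (p i - p l) := by
    rw [sum_sub_distrib, smul_sub, sum_const, ← Nat.cast_smul_eq_nsmul ℝ, smul_smul,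
      inv_mul_cancel₀ hcard.ne', one_smul]
  have hsum : ‖∑ l ∈ t, (p i - p l)‖ ≤ (#t - 1 : ℝ) * D :=
    calc ‖∑ l ∈ t, (p i - p l)‖ ≤ ∑ l ∈ t, ‖p i - p l‖ := norm_sum_le _ _
      _ = ∑ l ∈ t.erase i, ‖p i - p l‖ := (sum_erase t (by simp)).symm
      _ ≤ #(t.erase i) • D := sum_le_card_nsmul _ _ D fun l hl =>
            (dist_eq_norm (p i) (p l)) ▸ hD l (mem_of_mem_erase hl)
      _ = (#t - 1 : ℝ) * D := by
            rw [card_erase_of_mem hi, nsmul_eq_mul, Nat.cast_pred (card_pos.mpr ⟨i, hi⟩)]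
  calc dist (p i) ((#t : ℝ)⁻¹ • ∑ l ∈ t, p l)
      ≤ (#t : ℝ)⁻¹ * ((#t - 1 : ℝ) * D) := by
        rw [dist_eq_norm, hdiff, norm_smul, norm_inv, Real.norm_natCast]
        gcongr
    _ = (1 - (#t : ℝ)⁻¹) * D := by field_simp

theorem barycenter_mem_convexHull (ht : t.Nonempty) :
    (#t : ℝ)⁻¹ • ∑ l ∈ t, p l ∈ convexHull ℝ (p '' t) := by
  have hmem := centerMass_mem_convexHull t (w := fun _ => (1 : ℝ)) (fun _ _ => zero_le_one)
    (by simpa using ht.card_pos) (z := p) fun l hl => Set.mem_image_of_mem p hl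
  simpa [centerMass] using hmem

theorem dist_barycenter_le_of_subset (ht : t.Nonempty) (hsub : t ⊆ t')
    (hD : ∀ a ∈ t', ∀ l ∈ t', dist (p a) (p l) ≤ D) :
    dist ((#t : ℝ)⁻¹ • ∑ l ∈ t, p l) ((#t' : ℝ)⁻¹ • ∑ l ∈ t', p l) ≤ (1 - (#t' : ℝ)⁻¹) * D := by
  have hball : convexHull ℝ (p '' t) ⊆
      closedBall ((#t' : ℝ)⁻¹ • ∑ l ∈ t', p l) ((1 - (#t' : ℝ)⁻¹) * D) := by
    refine convexHull_min ?_ (convex_closedBall _ _)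
    rintro _ ⟨a, ha, rfl⟩
    exact mem_closedBall.mpr (dist_barycenter_le_of_mem p (hsub ha) (hD a (hsub ha)))
  exact mem_closedBall.mp (hball (barycenter_mem_convexHull p ht))

end Barycenter

theorem one_sub_inv_card_le {d : ℕ} {t : Finset (Fin (d + 1))} (ht : t.Nonempty) :
    1 - (#t : ℝ)⁻¹ ≤ (d : ℝ) / ((d : ℝ) + 1) := by
  have hcard : (0 : ℝ) < #t := by exact_mod_cast ht.card_pos
  have hle : (#t : ℝ) ≤ d + 1 := by exact_mod_cast (card_le_univ t).trans_eq (Fintype.card_fin _)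
  calc 1 - (#t : ℝ)⁻¹ ≤ 1 - ((d : ℝ) + 1)⁻¹ := by gcongr
    _ = (d : ℝ) / ((d : ℝ) + 1) := by field_simp; ring

/-- Every simplex of the barycentric subdivision of a `d`-simplex has diameter at
most `d/(d+1)` times the diameter of the original simplex: given points
`v 0, …, v d` in `ℝ^n` and a strictly increasing chain `s 0 ⊂ s 1 ⊂ ⋯ ⊂ s k` of
nonempty subsets of the index set, with `b j` the barycenter of `{v i : i ∈ s j}`,
the diameter of the convex hull of the `b j` is at most `d/(d+1)` times the
diameter of the convex hull of the `v i`. -/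
theorem stmt6 {n d k : ℕ} (v : Fin (d + 1) → EuclideanSpace ℝ (Fin n))
    (s : Fin (k + 1) → Finset (Fin (d + 1)))
    (hne : ∀ j, (s j).Nonempty) (hmono : StrictMono s)
    (b : Fin (k + 1) → EuclideanSpace ℝ (Fin n))
    (hb : ∀ j, b j = (((s j).card : ℝ))⁻¹ • ∑ i ∈ s j, v i) :
    Metric.diam (convexHull ℝ (Set.range b)) ≤
      ((d : ℝ) / ((d : ℝ) + 1)) * Metric.diam (convexHull ℝ (Set.range v)) := by
  rw [convexHull_diam, convexHull_diam]
  have hD : ∀ a l, dist (v a) (v l) ≤ diam (Set.range v) := fun a l =>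
    dist_le_diam_of_mem (Set.finite_range v).isBounded ⟨a, rfl⟩ ⟨l, rfl⟩
  have hchain : ∀ j j', j ≤ j' → dist (b j) (b j') ≤ (d / (d + 1) : ℝ) * diam (Set.range v) := by
    intro j j' hjj'
    calc dist (b j) (b j') ≤ (1 - (#(s j') : ℝ)⁻¹) * diam (Set.range v) := by
          rw [hb, hb]
          exact dist_barycenter_le_of_subset v (hne j) (hmono.monotone hjj')
            fun a _ l _ => hD a l
      _ ≤ (d / (d + 1) : ℝ) * diam (Set.range v) := by
          gcongr
          exact one_sub_inv_card_le (hne j')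
  refine diam_le_of_forall_dist_le (by positivity) ?_
  rintro _ ⟨j, rfl⟩ _ ⟨j', rfl⟩
  rcases le_total j j' with h | h
  · exact hchain j j' h
  · exact dist_comm (b j) (b j') ▸ hchain j' j h
end

section
/- Let F be a field, n ∈ ℕ, and let V be an F-vector space with basis e_0, e_1, …, e_n. Set V_i = span{e_0, …, e_i} for 0 ≤ i ≤ n. Let ∂ : V → V be a linear map with ∂ ∘ ∂ = 0, ∂ e_0 = 0, and ∂ e_j ∈ V_{j−1} for every j ≥ 1. Then there exist: a partition of {0, 1, …, n} into three disjoint sets B^×, B, D; a bijection π : B → D with b < π(b) for every b ∈ B; and a basis ê_0, ê_1, …, ê_n of V such that (i) span{ê_0, …, ê_i} = V_i for every i, (ii) ∂ ê_b = 0 for every b ∈ B^× ∪ B, and (iii) ∂ ê_{π(b)} = ê_b for every b ∈ B. -/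
/-!
Process the indices in increasing order, keeping a flag-compatible family `ee` and a pairing of
the indices processed so far. At a new index `a`, the vector `x = ∂ ee_a` lies in the span of the
earlier `ee_i` and is a cycle. Its `B`-component is a boundary `∂ y` with `y` in the span of the
`ee_d`, `d ∈ D`, and its `D`-component vanishes because `∂` is injective on that span; so after
replacing `ee_a` by `ee_a - y`, the boundary `z = ∂ ee_a` is a combination of the essential cycles
`ee_b`, `b ∈ Bx`. If `z = 0`, then `a` is essential. Otherwise let `b` be the largest essential
index occurring in `z`: replacing `ee_b` by `z` is a triangular change of basis, so the flag is
preserved, and `b` is paired with `a`.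
-/

open Submodule Function Set

section Flag

variable {F V ι : Type*} [Field F] [AddCommGroup V] [Module F V] [LinearOrder ι]

theorem span_image_Iio_le_of_Iic_le {f g : ι → V}
    (h : ∀ i, span F (f '' Iic i) ≤ span F (g '' Iic i)) (a : ι) :
    span F (f '' Iio a) ≤ span F (g '' Iio a) := by
  refine span_le.2 ?_
  rintro _ ⟨i, hi, rfl⟩
  exact span_mono (image_mono (Iic_subset_Iio.2 hi)) (h i (subset_span ⟨i, le_rfl, rfl⟩))

theorem map_mem_span_image_Iio {bd : V →ₗ[F] V} {e ee : ι → V}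
    (hbd : ∀ j, bd (e j) ∈ span F (e '' Iio j))
    (hflag : ∀ i, span F (ee '' Iic i) = span F (e '' Iic i)) (a : ι) :
    bd (ee a) ∈ span F (ee '' Iio a) := by
  have hmap : span F (e '' Iic a) ≤ (span F (e '' Iio a)).comap bd := by
    refine span_le.2 ?_
    rintro _ ⟨i, hi, rfl⟩
    exact span_mono (image_mono (Iio_subset_Iio hi)) (hbd i)
  have hee : ee a ∈ span F (e '' Iic a) := hflag a ▸ subset_span ⟨a, le_rfl, rfl⟩
  exact span_image_Iio_le_of_Iic_le (fun i => (hflag i).ge) a (hmap hee)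

theorem span_image_update_Iic {f : ι → V} {k : ι} {v : V} {c : F} (hc : c ≠ 0)
    (hv : v - c • f k ∈ span F (f '' Iio k)) (i : ι) :
    span F (update f k v '' Iic i) = span F (f '' Iic i) := by
  have hIio : update f k v '' Iio k = f '' Iio k :=
    image_congr fun m hm => update_of_ne (ne_of_lt hm) v f
  by_cases hki : k ≤ i
  · have hsub : Iio k ⊆ Iic i := fun m hm => le_of_lt (lt_of_lt_of_le hm hki)
    apply le_antisymm <;> refine span_le.2 ?_ <;> rintro _ ⟨m, hm, rfl⟩
    · by_cases hmk : m = k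
      · subst hmk
        rw [update_self, ← sub_add_cancel v (c • f m)]
        exact add_mem (span_mono (image_mono hsub) hv) (smul_mem _ _ (subset_span ⟨m, hm, rfl⟩))
      · rw [update_of_ne hmk]
        exact subset_span ⟨m, hm, rfl⟩
    · by_cases hmk : m = k
      · subst hmk
        have hv' : v - c • f m ∈ span F (update f m v '' Iic i) := by
          rw [← hIio] at hv
          exact span_mono (image_mono hsub) hv
        rw [← inv_smul_smul₀ hc (f m), ← sub_sub_cancel v (c • f m)]
        exact smul_mem _ _ (sub_mem (subset_span ⟨m, hm, update_self m v f⟩) hv')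
      · exact subset_span ⟨m, hm, update_of_ne hmk v f⟩
  · rw [image_congr fun m hm => update_of_ne (by rintro rfl; exact hki hm) v f]

theorem eq_zero_or_exists_sub_smul_mem_span_image_Iio {f : ι → V} {T : Finset ι} {z : V}
    (hz : z ∈ span F (f '' T)) :
    z = 0 ∨ ∃ k ∈ T, ∃ c : F, c ≠ 0 ∧ z - c • f k ∈ span F (f '' Iio k) := by
  induction T using Finset.induction_on_max generalizing z with
  | empty => simpa using hz
  | insert a T hlt ih =>
    rw [Finset.coe_insert, image_insert_eq, mem_span_insert] at hz
    obtain ⟨c, w, hw, rfl⟩ := hz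
    by_cases hc : c = 0
    · subst hc
      rw [zero_smul, zero_add]
      obtain h0 | ⟨k, hk, d, hd, hmem⟩ := ih hw
      · exact Or.inl h0
      · exact Or.inr ⟨k, Finset.mem_insert_of_mem hk, d, hd, hmem⟩
    · refine Or.inr ⟨a, Finset.mem_insert_self a T, c, hc, ?_⟩
      rw [add_sub_cancel_left]
      exact span_mono (image_mono hlt) hw

theorem exists_basis_coe_eq_of_span_image_Iic [Fintype ι] (e : Module.Basis ι F V) {ee : ι → V}
    (hflag : ∀ i, span F (ee '' Iic i) = span F (e '' Iic i)) :
    ∃ b : Module.Basis ι F V, ⇑b = ee := by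
  have := Module.Finite.of_basis e
  have hspan : ⊤ ≤ span F (range ee) := by
    rw [← e.span_eq, span_le]
    rintro _ ⟨i, rfl⟩
    have hi : e i ∈ span F (ee '' Iic i) := (hflag i).symm ▸ subset_span ⟨i, le_rfl, rfl⟩
    exact span_mono (image_subset_range ee _) hi
  have hcard : Fintype.card ι = Module.finrank F V := (Module.finrank_eq_card_basis e).symm
  exact ⟨basisOfTopLeSpanOfCardEqFinrank ee hspan hcard,
    coe_basisOfTopLeSpanOfCardEqFinrank ee hspan hcard⟩

end Flag

section Pairing

variable {F V ι : Type*} [Field F] [AddCommGroup V] [Module F V] [LinearOrder ι]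

/-- The state of the reduction once the indices in `s` have been processed. -/
structure PersistencePairing (bd : V →ₗ[F] V) (e : Module.Basis ι F V) (s : Finset ι) where
  Bx : Finset ι
  B : Finset ι
  D : Finset ι
  pr : ι → ι
  ee : ι → V
  disjoint_Bx_B : Disjoint Bx B
  disjoint_Bx_D : Disjoint Bx D
  disjoint_B_D : Disjoint B D
  union_eq : Bx ∪ B ∪ D = s
  bijOn : BijOn pr B D
  lt_pr : ∀ b ∈ B, b < pr b
  span_eq : ∀ i, span F (ee '' Iic i) = span F (e '' Iic i)
  bd_eq_zero : ∀ b ∈ Bx ∪ B, bd (ee b) = 0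
  bd_pr : ∀ b ∈ B, bd (ee (pr b)) = ee b

namespace PersistencePairing

variable {bd : V →ₗ[F] V} {e : Module.Basis ι F V} {s : Finset ι}

noncomputable def empty : PersistencePairing bd e ∅ where
  Bx := ∅
  B := ∅
  D := ∅
  pr := id
  ee := e
  disjoint_Bx_B := Finset.disjoint_empty_left _
  disjoint_Bx_D := Finset.disjoint_empty_left _
  disjoint_B_D := Finset.disjoint_empty_left _
  union_eq := rfl
  bijOn := by simp
  lt_pr := by simp
  span_eq _ := rfl
  bd_eq_zero := by simp
  bd_pr := by simp

variable (P : PersistencePairing bd e s)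

theorem mem_of_mem_Bx {b : ι} (hb : b ∈ P.Bx) : b ∈ s := by
  rw [← P.union_eq]; simp [hb]

theorem mem_of_mem_B {b : ι} (hb : b ∈ P.B) : b ∈ s := by
  rw [← P.union_eq]; simp [hb]

theorem mem_of_mem_D {d : ι} (hd : d ∈ P.D) : d ∈ s := by
  rw [← P.union_eq]; simp [hd]

theorem pr_mem_D {b : ι} (hb : b ∈ P.B) : P.pr b ∈ P.D := P.bijOn.mapsTo hb

theorem linearIndependent [Fintype ι] : LinearIndependent F P.ee := by
  obtain ⟨b, hb⟩ := exists_basis_coe_eq_of_span_image_Iic e P.span_eq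
  exact hb ▸ b.linearIndependent

def withEe (ee : ι → V) (heq : ∀ i ∈ s, ee i = P.ee i)
    (hspan : ∀ i, span F (ee '' Iic i) = span F (e '' Iic i)) : PersistencePairing bd e s :=
  { P with
    ee := ee
    span_eq := hspan
    bd_eq_zero := fun b hb => by
      rw [heq b ((Finset.mem_union.1 hb).elim P.mem_of_mem_Bx P.mem_of_mem_B)]
      exact P.bd_eq_zero b hb
    bd_pr := fun b hb => by
      rw [heq _ (P.mem_of_mem_D (P.pr_mem_D hb)), heq b (P.mem_of_mem_B hb)]
      exact P.bd_pr b hb }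

def insertEssential (a : ι) (ha : a ∉ s) (hbda : bd (P.ee a) = 0) :
    PersistencePairing bd e (insert a s) :=
  { P with
    Bx := insert a P.Bx
    disjoint_Bx_B := Finset.disjoint_insert_left.2
      ⟨fun h => ha (P.mem_of_mem_B h), P.disjoint_Bx_B⟩
    disjoint_Bx_D := Finset.disjoint_insert_left.2
      ⟨fun h => ha (P.mem_of_mem_D h), P.disjoint_Bx_D⟩
    union_eq := by rw [Finset.insert_union, Finset.insert_union, P.union_eq]
    bd_eq_zero := fun b hb => by
      rw [Finset.insert_union, Finset.mem_insert] at hb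
      rcases hb with rfl | hb
      · exact hbda
      · exact P.bd_eq_zero b hb }

theorem span_image_Bx_le_ker : span F (P.ee '' P.Bx) ≤ LinearMap.ker bd :=
  span_le.2 <| by
    rintro _ ⟨b, hb, rfl⟩
    exact P.bd_eq_zero b (Finset.mem_union_left _ hb)

theorem span_image_B_le_map : span F (P.ee '' P.B) ≤ (span F (P.ee '' P.D)).map bd := by
  rw [map_span]
  refine span_le.2 ?_
  rintro _ ⟨b, hb, rfl⟩
  exact subset_span ⟨P.ee (P.pr b), ⟨P.pr b, P.pr_mem_D hb, rfl⟩, P.bd_pr b hb⟩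

theorem eq_zero_of_mem_span_image_D [Fintype ι] {w : V} (hw : w ∈ span F (P.ee '' P.D))
    (hbdw : bd w = 0) : w = 0 := by
  have hD : P.D = P.B.image P.pr := by
    apply Finset.coe_injective
    rw [Finset.coe_image, P.bijOn.image_eq]
  obtain ⟨c, rfl⟩ := (mem_span_image_finset_iff_exists_fun' F).1 hw
  rw [hD, Finset.sum_image P.bijOn.injOn] at hbdw ⊢
  simp only [map_sum, map_smul] at hbdw
  rw [Finset.sum_congr rfl fun b hb => by rw [P.bd_pr b hb]] at hbdw
  have hc := linearIndependent_iff'.1 P.linearIndependent P.B _ hbdw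
  exact Finset.sum_eq_zero fun b hb => by rw [hc b hb, zero_smul]

theorem exists_sub_bd_mem_span_image_Bx [Fintype ι] (hbd2 : bd ∘ₗ bd = 0) {x : V}
    (hx : x ∈ span F (P.ee '' s))
    (hbdx : bd x = 0) : ∃ y ∈ span F (P.ee '' P.D), x - bd y ∈ span F (P.ee '' P.Bx) := by
  have hs : (s : Set ι) = ↑P.Bx ∪ ↑P.B ∪ ↑P.D := by
    rw [← Finset.coe_union, ← Finset.coe_union, P.union_eq]
  rw [hs, image_union, image_union, span_union, span_union] at hx
  obtain ⟨_, huv, w, hw, rfl⟩ := mem_sup.1 hx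
  obtain ⟨u, hu, _, hv, rfl⟩ := mem_sup.1 huv
  obtain ⟨y, hy, rfl⟩ := P.span_image_B_le_map hv
  have hbdbd : bd (bd y) = 0 := by simpa using LinearMap.congr_fun hbd2 y
  have hw0 : w = 0 := P.eq_zero_of_mem_span_image_D hw <| by
    simpa [LinearMap.mem_ker.1 (P.span_image_Bx_le_ker hu), hbdbd] using hbdx
  exact ⟨y, hy, by simpa [hw0] using hu⟩

def insertDeath (hbd2 : bd ∘ₗ bd = 0) (a : ι) (ha : a ∉ s) {b : ι} (hb : b ∈ P.Bx)
    (hba : b < a) {c : F} (hc : c ≠ 0)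
    (hmem : bd (P.ee a) - c • P.ee b ∈ span F (P.ee '' Iio b)) :
    PersistencePairing bd e (insert a s) where
  Bx := P.Bx.erase b
  B := insert b P.B
  D := insert a P.D
  pr := update P.pr b a
  ee := update P.ee b (bd (P.ee a))
  disjoint_Bx_B := by
    rw [Finset.disjoint_insert_right]
    exact ⟨Finset.notMem_erase b _, P.disjoint_Bx_B.mono_left (Finset.erase_subset b _)⟩
  disjoint_Bx_D := by
    rw [Finset.disjoint_insert_right]
    exact ⟨fun h => ha (P.mem_of_mem_Bx (Finset.mem_of_mem_erase h)),
      P.disjoint_Bx_D.mono_left (Finset.erase_subset b _)⟩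
  disjoint_B_D := by
    rw [Finset.disjoint_insert_left, Finset.disjoint_insert_right, Finset.mem_insert]
    exact ⟨by rintro (h | h); exacts [hba.ne h, Finset.disjoint_left.1 P.disjoint_Bx_D hb h],
      fun h => ha (P.mem_of_mem_B h), P.disjoint_B_D⟩
  union_eq := by
    ext m
    have hs := Finset.ext_iff.1 P.union_eq m
    simp only [Finset.mem_union, Finset.mem_insert, Finset.mem_erase] at hs ⊢
    by_cases hm : m = b
    · subst hm; tauto
    · tauto
  bijOn := by
    have hbB : b ∉ P.B := Finset.disjoint_left.1 P.disjoint_Bx_B hb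
    have hpr : EqOn P.pr (update P.pr b a) P.B := fun m hm =>
      (update_of_ne (by rintro rfl; exact hbB hm) a P.pr).symm
    have hbij := (P.bijOn.congr hpr).insert (a := b) (by
      rw [update_self]; exact fun h => ha (P.mem_of_mem_D h))
    rw [update_self] at hbij
    simpa only [Finset.coe_insert] using hbij
  lt_pr m hm := by
    rcases Finset.mem_insert.1 hm with rfl | hm
    · rw [update_self]; exact hba
    · rw [update_of_ne fun h : m = b => Finset.disjoint_left.1 P.disjoint_Bx_B hb (h ▸ hm)]
      exact P.lt_pr m hm
  span_eq i := (span_image_update_Iic hc hmem i).trans (P.span_eq i)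
  bd_eq_zero m hm := by
    by_cases hmb : m = b
    · subst hmb
      simpa using LinearMap.congr_fun hbd2 (P.ee a)
    · rw [update_of_ne hmb]
      apply P.bd_eq_zero
      simpa [hmb] using hm
  bd_pr m hm := by
    rcases Finset.mem_insert.1 hm with rfl | hm
    · simp only [update_self, update_of_ne hba.ne']
    · have hmb : m ≠ b := fun h => Finset.disjoint_left.1 P.disjoint_Bx_B hb (h ▸ hm)
      have hprb : P.pr m ≠ b := fun h =>
        Finset.disjoint_left.1 P.disjoint_Bx_D hb (h ▸ P.pr_mem_D hm)
      rw [update_of_ne hmb, update_of_ne hmb, update_of_ne hprb]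
      exact P.bd_pr m hm

theorem nonempty_insert [Fintype ι] (P : PersistencePairing bd e s) (hbd2 : bd ∘ₗ bd = 0)
    (hbd : ∀ j, bd (e j) ∈ span F (e '' Iio j)) {a : ι} (hlt : ∀ i ∈ s, i < a)
    (hIio : ∀ i < a, i ∈ s) :
    Nonempty (PersistencePairing bd e (insert a s)) := by
  have ha : a ∉ s := fun h => lt_irrefl a (hlt a h)
  have hx : bd (P.ee a) ∈ span F (P.ee '' s) :=
    span_mono (image_mono hIio) (map_mem_span_image_Iio hbd P.span_eq a)
  obtain ⟨y, hy, hz⟩ := P.exists_sub_bd_mem_span_image_Bx hbd2 hx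
    (by simpa using LinearMap.congr_fun hbd2 (P.ee a))
  have hyIio : y ∈ span F (P.ee '' Iio a) :=
    span_mono (image_mono fun d hd => hlt d (P.mem_of_mem_D hd)) hy
  have hagree : ∀ i ∈ s, update P.ee a (P.ee a - y) i = P.ee i := fun i hi =>
    update_of_ne (hlt i hi).ne _ _
  let Q := P.withEe (update P.ee a (P.ee a - y)) hagree fun i =>
    (span_image_update_Iic one_ne_zero (by simpa using neg_mem hyIio) i).trans (P.span_eq i)
  have hQ : bd (Q.ee a) ∈ span F (Q.ee '' Q.Bx) := by
    have himage : Q.ee '' Q.Bx = P.ee '' P.Bx :=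
      image_congr fun i hi => hagree i (P.mem_of_mem_Bx hi)
    rw [himage]
    simpa [Q, withEe] using hz
  rcases eq_zero_or_exists_sub_smul_mem_span_image_Iio hQ with h0 | ⟨b, hb, c, hc, hmem⟩
  · exact ⟨Q.insertEssential a ha h0⟩
  · exact ⟨Q.insertDeath hbd2 a ha hb (hlt b (Q.mem_of_mem_Bx hb)) hc hmem⟩

end PersistencePairing

theorem nonempty_persistencePairing_univ [Fintype ι] {bd : V →ₗ[F] V} {e : Module.Basis ι F V}
    (hbd2 : bd ∘ₗ bd = 0) (hbd : ∀ j, bd (e j) ∈ span F (e '' Iio j)) :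
    Nonempty (PersistencePairing bd e Finset.univ) := by
  suffices h : ∀ s : Finset ι, IsLowerSet (s : Set ι) →
      Nonempty (PersistencePairing bd e s) from h _ (by simpa using isLowerSet_univ)
  intro s
  induction s using Finset.induction_on_max with
  | empty => exact fun _ => ⟨.empty⟩
  | insert a s hlt ih =>
    intro hlow
    have hIio : ∀ i < a, i ∈ s := fun i hi =>
      (Finset.mem_insert.1 (hlow hi.le (Finset.mem_insert_self a s))).resolve_left hi.ne
    have hs : IsLowerSet (s : Set ι) := fun x y hyx hx => hIio y (lt_of_le_of_lt hyx (hlt x hx))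
    obtain ⟨P⟩ := ih hs
    exact P.nonempty_insert hbd2 hbd hlt hIio

end Pairing

/-- The pairing (birth–death) theorem underlying persistent homology.
Given a vector space `V` over a field `F` with basis `e 0, …, e n`, the flag
`V_i = span {e 0, …, e i}`, and a boundary operator `bd` with `bd ∘ bd = 0`,
`bd (e 0) = 0` and `bd (e j) ∈ V_{j-1}` for `j ≥ 1`, there is a partition of the
index set into `Bx`, `B`, `D`, a pairing `pr : B ≃ D` with `b < pr b`, and a new
basis `ee` compatible with the flag such that `bd ee_b = 0` for `b ∈ Bx ∪ B` and
`bd ee_{pr b} = ee_b` for `b ∈ B`. -/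
theorem stmt12 {F : Type*} [Field F] {V : Type*} [AddCommGroup V] [Module F V]
    (n : ℕ) (e : Module.Basis (Fin (n + 1)) F V) (bd : V →ₗ[F] V)
    (hbd2 : bd ∘ₗ bd = 0) (hbd0 : bd (e 0) = 0)
    (hfilt : ∀ j : Fin (n + 1), 0 < (j : ℕ) →
      bd (e j) ∈ Submodule.span F (e '' {i : Fin (n + 1) | (i : ℕ) < (j : ℕ)})) :
    ∃ (Bx B D : Finset (Fin (n + 1))) (pr : Fin (n + 1) → Fin (n + 1))
      (ee : Module.Basis (Fin (n + 1)) F V),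
      Disjoint Bx B ∧ Disjoint Bx D ∧ Disjoint B D ∧ Bx ∪ B ∪ D = Finset.univ ∧
      Set.BijOn pr (B : Set (Fin (n + 1))) (D : Set (Fin (n + 1))) ∧
      (∀ b ∈ B, b < pr b) ∧
      (∀ i : Fin (n + 1),
        Submodule.span F (ee '' {j : Fin (n + 1) | j ≤ i}) =
          Submodule.span F (e '' {j : Fin (n + 1) | j ≤ i})) ∧
      (∀ b ∈ Bx ∪ B, bd (ee b) = 0) ∧
      (∀ b ∈ B, bd (ee (pr b)) = ee b) := by
  have hbd : ∀ j, bd (e j) ∈ span F (e '' Iio j) := by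
    intro j
    rcases Nat.eq_zero_or_pos j with hj | hj
    · obtain rfl : j = 0 := Fin.ext hj
      rw [hbd0]
      exact zero_mem _
    · exact hfilt j hj
  obtain ⟨P⟩ := nonempty_persistencePairing_univ hbd2 hbd
  obtain ⟨ee, hee⟩ := exists_basis_coe_eq_of_span_image_Iic e P.span_eq
  exact ⟨P.Bx, P.B, P.D, P.pr, ee, P.disjoint_Bx_B, P.disjoint_Bx_D, P.disjoint_B_D, P.union_eq,
    P.bijOn, P.lt_pr, hee ▸ P.span_eq, hee ▸ P.bd_eq_zero, hee ▸ P.bd_pr⟩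
end
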